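/- arXiv:2510.09231 — 5 statements merged into one kernel-verified Lean document; each statement's English description precedes it below -/
import Mathlib

section
/- Heat-case quantitative bound on the comparison sequence: Let λ_0 ≥ 0 and τ > 0 with τλ_0 ≤ 1. Define E_0^τ = τλ_0 and E_k^τ by the backward recursion E_k^τ = E_{k+1}^τ/(1 - E_{k+1}^τ)² with E_{k+1}^τ ∈ [0,1). Then for all k ≥ 0, (1/τ) E_k^τ ≤ λ_0 / (τ k λ_0 (2 - τλ_0) + 1). -/
/-- Heat-case quantitative bound on the comparison sequence: with `E 0 = τλ₀`,
`τλ₀ ≤ 1`, and the backward recursion `E k = E (k+1)/(1 - E (k+1))²`,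
`E (k+1) ∈ [0,1)`, one has `(1/τ) E k ≤ λ₀ / (τ k λ₀ (2 - τλ₀) + 1)` for all `k`. -/
theorem heat_comparison_bound
    (lam0 τ : ℝ) (hlam0 : 0 ≤ lam0) (hτ : 0 < τ) (hτlam : τ * lam0 ≤ 1)
    (E : ℕ → ℝ) (h0 : E 0 = τ * lam0)
    (hmem : ∀ k : ℕ, 0 ≤ E (k + 1) ∧ E (k + 1) < 1)
    (hrec : ∀ k : ℕ, E (k + 1) / (1 - E (k + 1)) ^ 2 = E k) :
    ∀ k : ℕ, (1 / τ) * E k ≤ lam0 / (τ * k * lam0 * (2 - τ * lam0) + 1) := by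
  set a := τ * lam0 with ha
  have ha0 : 0 ≤ a := mul_nonneg hτ.le hlam0
  have ha1 : a ≤ 1 := hτlam
  have hc : 0 ≤ a * (2 - a) := mul_nonneg ha0 (by linarith)
  have key : ∀ k : ℕ, E k ≤ a / ((k : ℝ) * a * (2 - a) + 1) := by
    intro k
    induction k with
    | zero => simp [h0, ha]
    | succ k ih =>
      have hk0 : (0:ℝ) ≤ (k:ℝ) := Nat.cast_nonneg k
      have hD : (1:ℝ) ≤ (k:ℝ) * a * (2 - a) + 1 := by nlinarith
      obtain ⟨he0, he1⟩ := hmem k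
      have hrk := hrec k
      have h1e : 0 < (1 - E (k+1))^2 := pow_pos (by linarith) 2
      have heE : E (k+1) ≤ E k := by
        rw [← hrk, le_div_iff₀ h1e]
        nlinarith [mul_nonneg (mul_nonneg he0 he0) (by linarith : (0:ℝ) ≤ 2 - E (k+1))]
      have hEa : E k ≤ a := le_trans ih (by rw [div_le_iff₀ (by linarith)]; nlinarith)
      have hea : E (k+1) ≤ a := le_trans heE hEa
      have h2 : E (k+1) * ((k:ℝ) * a * (2 - a) + 1) ≤ a * (1 - E (k+1))^2 := by
        have h := ih
        rw [← hrk, div_le_div_iff₀ h1e (by linarith)] at h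
        nlinarith [h]
      have hDpos : (0:ℝ) < ((k:ℕ)+1 : ℝ) * a * (2 - a) + 1 := by nlinarith
      rw [le_div_iff₀ (by push_cast at hDpos ⊢; linarith)]
      push_cast
      nlinarith [mul_nonneg (mul_nonneg ha0 he0) (sub_nonneg.mpr hea)]
  intro k
  have hk0 : (0:ℝ) ≤ (k:ℝ) := Nat.cast_nonneg k
  have hnn : (0:ℝ) ≤ τ * (k:ℝ) * lam0 * (2 - a) :=
    mul_nonneg (mul_nonneg (mul_nonneg hτ.le hk0) hlam0) (by linarith)
  have hDpos : (0:ℝ) < τ * (k:ℝ) * lam0 * (2 - a) + 1 := by linarith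
  have hD2pos : (0:ℝ) < (k:ℝ) * a * (2 - a) + 1 := by nlinarith
  have h := key k
  rw [le_div_iff₀ hD2pos] at h
  rw [le_div_iff₀ hDpos]
  have heq : τ * (k:ℝ) * lam0 * (2 - a) + 1 = (k:ℝ) * a * (2 - a) + 1 := by
    rw [ha]; ring
  rw [div_mul_eq_mul_div, one_mul, div_mul_eq_mul_div, div_le_iff₀ hτ, heq]
  have ha' : a = lam0 * τ := by rw [ha]; ring
  linarith [h]
end

section
/- Intermediate heat-case bound: with E_k^τ as in the heat-case recursion (E_k^τ = E_{k+1}^τ/(1-E_{k+1}^τ)², E_0^τ = τλ_0 ∈ [0,1)), for any K ≥ 1 one has E_k^τ ≤ max(τ K λ_0, f(K)) / (k + K) for all k ≥ 0, where f(z) = z - √(z(z-1)). -/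
lemma heat_fmono (K z : ℝ) (hK : 1 ≤ K) (hz : K ≤ z) :
    z - Real.sqrt (z * (z - 1)) ≤ K - Real.sqrt (K * (K - 1)) := by
  have hz1 : 1 ≤ z := le_trans hK hz
  set s := Real.sqrt (z * (z - 1)) with hs
  set t := Real.sqrt (K * (K - 1)) with ht
  have hs0 : 0 ≤ s := Real.sqrt_nonneg _
  have ht0 : 0 ≤ t := Real.sqrt_nonneg _
  have hs2 : s ^ 2 = z * (z - 1) := Real.sq_sqrt (by nlinarith)
  have ht2 : t ^ 2 = K * (K - 1) := Real.sq_sqrt (by nlinarith)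
  have hsle : s ≤ z - 1 / 2 := by
    have h1 : z * (z - 1) ≤ (z - 1 / 2) ^ 2 := by nlinarith
    calc s ≤ Real.sqrt ((z - 1 / 2) ^ 2) := Real.sqrt_le_sqrt h1
      _ = z - 1 / 2 := Real.sqrt_sq (by linarith)
  have htle : t ≤ K - 1 / 2 := by
    have h1 : K * (K - 1) ≤ (K - 1 / 2) ^ 2 := by nlinarith
    calc t ≤ Real.sqrt ((K - 1 / 2) ^ 2) := Real.sqrt_le_sqrt h1
      _ = K - 1 / 2 := Real.sqrt_sq (by linarith)
  rcases eq_or_lt_of_le (add_nonneg hs0 ht0) with h | h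
  · have hs' : s = 0 := by linarith
    have ht' : t = 0 := by linarith
    nlinarith [hs2, ht2, hs', ht']
  · have key : (s - t) * (s + t) = (z - K) * (z + K - 1) := by
      linear_combination hs2 - ht2
    have h2 : (z - K) * (s + t) ≤ (s - t) * (s + t) := by
      rw [key]
      exact mul_le_mul_of_nonneg_left (by linarith) (by linarith)
    have h3 := le_of_mul_le_mul_right h2 h
    linarith

set_option maxHeartbeats 1000000 in
/-- Intermediate heat-case bound: with `E 0 = τλ₀ ∈ [0,1)` and the backward
recursion `E k = E (k+1)/(1 - E (k+1))²`, for any `K ≥ 1` one has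
`E k ≤ max(τKλ₀, f(K)) / (k + K)` where `f(z) = z - √(z(z-1))`. -/
theorem heat_comparison_intermediate_bound
    (lam0 τ : ℝ) (hlam0 : 0 ≤ lam0) (hτ : 0 < τ) (hτlam : τ * lam0 < 1)
    (E : ℕ → ℝ) (h0 : E 0 = τ * lam0)
    (hmem : ∀ k : ℕ, 0 ≤ E (k + 1) ∧ E (k + 1) < 1)
    (hrec : ∀ k : ℕ, E (k + 1) / (1 - E (k + 1)) ^ 2 = E k)
    (K : ℝ) (hK : 1 ≤ K) :
    ∀ k : ℕ, E k ≤ max (τ * K * lam0) (K - Real.sqrt (K * (K - 1))) / ((k : ℝ) + K) := by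
  set M := max (τ * K * lam0) (K - Real.sqrt (K * (K - 1))) with hM
  have hK0 : (0 : ℝ) < K := lt_of_lt_of_le one_pos hK
  have hfK : 0 < K - Real.sqrt (K * (K - 1)) := by
    have h1 : Real.sqrt (K * (K - 1)) < Real.sqrt (K ^ 2) := by
      apply Real.sqrt_lt_sqrt (by nlinarith) (by nlinarith)
    rw [Real.sqrt_sq hK0.le] at h1
    linarith
  have hM0 : 0 < M := lt_max_of_lt_right hfK
  have hMK : M < K + 1 := by
    apply max_lt
    · nlinarith
    · nlinarith [Real.sqrt_nonneg (K * (K - 1))]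
  clear_value M
  intro k
  induction k with
  | zero =>
    simp only [Nat.cast_zero, zero_add]
    rw [h0, le_div_iff₀ hK0]
    calc τ * lam0 * K = τ * K * lam0 := by ring
      _ ≤ M := by rw [hM]; exact le_max_left _ _
  | succ k ih =>
    by_contra hcon
    push_neg at hcon
    set b : ℝ := (k : ℝ) + 1 + K with hb
    clear_value b
    have hk0 : (0 : ℝ) ≤ (k : ℝ) := Nat.cast_nonneg k
    have hbpos : (0 : ℝ) < b := by rw [hb]; linarith
    have ha : (0 : ℝ) < (k : ℝ) + K := by linarith
    obtain ⟨hE0, hE1⟩ := hmem k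
    have hKb : K ≤ b := by rw [hb]; linarith
    have hMb : M < b := by rw [hb]; linarith
    have hbM : 0 < b - M := by linarith
    have hfb : b - Real.sqrt (b * (b - 1)) ≤ M :=
      le_trans (heat_fmono K b hK hKb) (by rw [hM]; exact le_max_right _ _)
    have hsq : (0 : ℝ) ≤ b * (b - 1) := by nlinarith
    have hsab : (Real.sqrt (b * (b - 1))) ^ 2 = b * (b - 1) := Real.sq_sqrt hsq
    have hkey : (b - M) ^ 2 ≤ ((k : ℝ) + K) * b := by
      have h1 : b - M ≤ Real.sqrt (b * (b - 1)) := by linarith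
      have h2 : (b - M) ^ 2 ≤ (Real.sqrt (b * (b - 1))) ^ 2 :=
        pow_le_pow_left₀ hbM.le h1 2
      have h3 : b - 1 = (k : ℝ) + K := by rw [hb]; ring
      rw [hsab, h3] at h2
      linarith [h2]
    have hRHS : (M / b) / (1 - M / b) ^ 2 = M * b / (b - M) ^ 2 := by
      have h1 : 1 - M / b = (b - M) / b := by field_simp
      rw [h1, div_pow]
      field_simp
    have hGx : M / ((k : ℝ) + K) ≤ (M / b) / (1 - M / b) ^ 2 := by
      rw [hRHS, div_le_div_iff₀ ha (by positivity)]
      nlinarith [mul_le_mul_of_nonneg_left hkey hM0.le]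
    have hx0 : 0 ≤ M / b := by positivity
    have hx1 : M / b < 1 := by rw [div_lt_one hbpos]; exact hMb
    have hE : M / b < E (k + 1) := by
      have hcast : ((k + 1 : ℕ) : ℝ) + K = b := by rw [hb]; push_cast; ring
      rwa [hcast] at hcon
    have hxy : M / b * E (k + 1) ≤ M / b := mul_le_of_le_one_right hx0 hE1.le
    have h1xy : 0 < 1 - M / b * E (k + 1) := by linarith
    have hmono : (M / b) / (1 - M / b) ^ 2 < E (k + 1) / (1 - E (k + 1)) ^ 2 := by
      rw [div_lt_div_iff₀ (pow_pos (by linarith) 2) (pow_pos (by linarith) 2)]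
      nlinarith [mul_pos (sub_pos.2 hE) h1xy]
    rw [hrec k] at hmono
    have : M / ((k : ℝ) + K) < E k := lt_of_le_of_lt hGx hmono
    exact absurd ih (not_le.2 this)
end

section
/- Fixed points of the Granular-Medium comparison map: let λ*, L* ≥ 0 with λ* + L* > 0, let τ > 0 with τ λ* < 1, and define G[E,τ] = (E/(1-E)²)(1 - τ(2λ* + L*) + τ(λ* + L*)E) for E ∈ [0,1). Then G[E,τ] - E has the opposite sign of the polynomial P(E) = E² - (2 + τ(λ*+L*))E + τ(2λ*+L*); P has exactly one root E_c^τ in [0,1), given explicitly by E_c^τ = (1 + τ(λ*+L*)/2)(1 - √(1 - 4τ(2λ*+L*)/(2+τ(λ*+L*))²)); and G[E,τ] < E on (0,E_c^τ), G[E,τ] > E on (E_c^τ,1), G[0,τ]=0, G[E_c^τ,τ]=E_c^τ. -/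
/-- Fixed points of the Granular-Medium comparison map
`G[E,τ] = (E/(1-E)²)(1 - τ(2λ*+L*) + τ(λ*+L*)E)`: one has
`G[E,τ] - E = -(E/(1-E)²) P(E)` with `P(E) = E² - (2+τ(λ*+L*))E + τ(2λ*+L*)`;
`P` has exactly one root `E_c^τ` in `[0,1)`, given by the explicit formula, and
`G < id` on `(0,E_c^τ)`, `G > id` on `(E_c^τ,1)`, with `0` and `E_c^τ` fixed points. -/
theorem granular_comparison_fixed_points
    (lam L τ : ℝ) (hlam : 0 ≤ lam) (hL : 0 ≤ L) (hpos : 0 < lam + L)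
    (hτ : 0 < τ) (hτlam : τ * lam < 1) :
    let G : ℝ → ℝ := fun E =>
      (E / (1 - E) ^ 2) * (1 - τ * (2 * lam + L) + τ * (lam + L) * E)
    let P : ℝ → ℝ := fun E => E ^ 2 - (2 + τ * (lam + L)) * E + τ * (2 * lam + L)
    let Ec : ℝ := (1 + τ * (lam + L) / 2) *
      (1 - Real.sqrt (1 - 4 * τ * (2 * lam + L) / (2 + τ * (lam + L)) ^ 2))
    (∀ E : ℝ, 0 ≤ E → E < 1 → G E - E = -(E / (1 - E) ^ 2) * P E) ∧
    (0 < Ec ∧ Ec < 1) ∧ P Ec = 0 ∧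
    (∀ E : ℝ, 0 ≤ E → E < 1 → P E = 0 → E = Ec) ∧
    (∀ E : ℝ, 0 < E → E < Ec → G E < E) ∧
    (∀ E : ℝ, Ec < E → E < 1 → E < G E) ∧
    G 0 = 0 ∧ G Ec = Ec := by
  intro G P Ec
  set b : ℝ := 2 + τ * (lam + L) with hb
  set c : ℝ := τ * (2 * lam + L) with hcdef
  have hbpos : 2 < b := by nlinarith
  have hcpos : 0 < c := by nlinarith
  have hDgt : (b - 2) ^ 2 < b ^ 2 - 4 * c := by nlinarith
  have hDpos : 0 < b ^ 2 - 4 * c := by nlinarith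
  set s : ℝ := Real.sqrt (b ^ 2 - 4 * c) with hsdef
  have hs2 : s ^ 2 = b ^ 2 - 4 * c := Real.sq_sqrt hDpos.le
  have hspos : 0 < s := Real.sqrt_pos.mpr hDpos
  have hsb : s < b := by nlinarith
  have hsb2 : b - 2 < s := by nlinarith
  -- Ec equals the smaller root (b - s)/2
  have hEc : Ec = (b - s) / 2 := by
    have h1 : 1 - 4 * τ * (2 * lam + L) / (2 + τ * (lam + L)) ^ 2
        = (b ^ 2 - 4 * c) / b ^ 2 := by
      rw [hb, hcdef]; field_simp
    show (1 + τ * (lam + L) / 2) *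
        (1 - Real.sqrt (1 - 4 * τ * (2 * lam + L) / (2 + τ * (lam + L)) ^ 2)) = (b - s) / 2
    rw [h1, Real.sqrt_div hDpos.le, Real.sqrt_sq (by linarith : (0:ℝ) ≤ b), ← hsdef]
    have hb0 : b ≠ 0 := by linarith
    have : (1 : ℝ) + τ * (lam + L) / 2 = b / 2 := by rw [hb]; ring
    rw [this]; field_simp
  have hEcpos : 0 < Ec := by rw [hEc]; linarith
  have hEclt : Ec < 1 := by rw [hEc]; linarith
  -- P factorization
  have hPfact : ∀ E : ℝ, P E = (E - Ec) * (E - (b + s) / 2) := by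
    intro E
    show E ^ 2 - b * E + c = (E - Ec) * (E - (b + s) / 2)
    rw [hEc]; linear_combination hs2 / 4
  have hbig : (1 : ℝ) < (b + s) / 2 := by linarith
  -- G − E identity
  have hGP : ∀ E : ℝ, 0 ≤ E → E < 1 → G E - E = -(E / (1 - E) ^ 2) * P E := by
    intro E hE0 hE1
    have h1 : (1 : ℝ) - E ≠ 0 := by linarith
    show (E / (1 - E) ^ 2) * (1 - τ * (2 * lam + L) + τ * (lam + L) * E) - E
        = -(E / (1 - E) ^ 2) * (E ^ 2 - b * E + c)
    rw [hb, hcdef]; field_simp; ring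
  refine ⟨hGP, ⟨hEcpos, hEclt⟩, ?_, ?_, ?_, ?_, ?_, ?_⟩
  · rw [hPfact, hEc]; ring
  · intro E hE0 hE1 hPE
    rw [hPfact] at hPE
    rcases mul_eq_zero.mp hPE with h | h
    · linarith
    · linarith
  · intro E hE0 hE1
    have hE1' : E < 1 := lt_trans hE1 hEclt
    have hP : 0 < P E := by
      rw [hPfact]
      exact mul_pos_of_neg_of_neg (by linarith) (by linarith)
    have hq : 0 < E / (1 - E) ^ 2 :=
      div_pos hE0 (pow_pos (by linarith : (0:ℝ) < 1 - E) 2)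
    have h3 := hGP E hE0.le hE1'
    have h4 : -(E / (1 - E) ^ 2) * P E < 0 :=
      mul_neg_of_neg_of_pos (by linarith) hP
    linarith
  · intro E hE0 hE1
    have hE0' : 0 ≤ E := le_of_lt (lt_trans hEcpos hE0)
    have hP : P E < 0 := by
      rw [hPfact]
      exact mul_neg_of_pos_of_neg (by linarith) (by linarith)
    have hq : 0 < E / (1 - E) ^ 2 :=
      div_pos (lt_trans hEcpos hE0) (pow_pos (by linarith : (0:ℝ) < 1 - E) 2)
    have h3 := hGP E hE0' hE1
    have h4 : 0 < -(E / (1 - E) ^ 2) * P E :=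
      mul_pos_of_neg_of_neg (by linarith) hP
    linarith
  · show (0 / (1 - 0) ^ 2) * _ = 0
    simp
  · have hP : P Ec = 0 := by rw [hPfact, hEc]; ring
    have := hGP Ec hEcpos.le hEclt
    rw [hP] at this
    linarith [this]
end

section
/- Monotonicity of the comparison sequence in the time step: Let λ*, L* ≥ 0, λ_0 ∈ [0,∞), and for τ > 0 small define (E_k^τ)_{k≥0} with E_0^τ = τλ_0 and E_k^τ = G[E_{k+1}^τ, τ] where G[E,τ] = (E/(1-E)²)(1 - τ(2λ*+L*) + τ(λ*+L*)E), with E_{k+1}^τ the solution in [0,1). Writing G[E,τ] = E/(1-E)² + τ R[E] with R[E] = (E/(1-E)²)((λ*+L*)E - (2λ*+L*)) ≤ 0 on [0,1), one has: if 0 < τ ≤ η (both admissible) then E_k^τ ≤ E_k^η for all k ≥ 0. -/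
/-- Monotonicity of the comparison sequence in the time step: if `0 < τ ≤ η` are
both admissible, and `(E^τ_k)`, `(E^η_k)` are the comparison sequences defined by
`E_0 = τλ₀` (resp. `ηλ₀`) and the backward recursion `G[E_{k+1}, τ] = E_k` with
`G[E,τ] = (E/(1-E)²)(1 - τ(2λ*+L*) + τ(λ*+L*)E)`, then `E^τ_k ≤ E^η_k` for all `k`. -/
theorem comparison_sequence_monotone_in_step
    (lam L lam0 τ η : ℝ) (hlam : 0 ≤ lam) (hL : 0 ≤ L) (hlam0 : 0 ≤ lam0)
    (hτ : 0 < τ) (hτη : τ ≤ η)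
    (hadm1 : η * (2 * lam + L) < 1) (hadm2 : η * lam0 < 1)
    (Eτ Eη : ℕ → ℝ)
    (h0τ : Eτ 0 = τ * lam0) (h0η : Eη 0 = η * lam0)
    (hmemτ : ∀ k : ℕ, 0 ≤ Eτ (k + 1) ∧ Eτ (k + 1) < 1)
    (hmemη : ∀ k : ℕ, 0 ≤ Eη (k + 1) ∧ Eη (k + 1) < 1)
    (hrecτ : ∀ k : ℕ, (Eτ (k + 1) / (1 - Eτ (k + 1)) ^ 2) *
      (1 - τ * (2 * lam + L) + τ * (lam + L) * Eτ (k + 1)) = Eτ k)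
    (hrecη : ∀ k : ℕ, (Eη (k + 1) / (1 - Eη (k + 1)) ^ 2) *
      (1 - η * (2 * lam + L) + η * (lam + L) * Eη (k + 1)) = Eη k) :
    ∀ k : ℕ, Eτ k ≤ Eη k := by
  intro k
  induction k with
  | zero =>
    rw [h0τ, h0η]
    exact mul_le_mul_of_nonneg_right hτη hlam0
  | succ k ih =>
    by_contra h
    push_neg at h
    obtain ⟨hx0, hx1⟩ := hmemη k
    obtain ⟨hy0, hy1⟩ := hmemτ k
    set x := Eη (k + 1) with hxdef
    set y := Eτ (k + 1) with hydef
    have hxy : x < y := h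
    have hτA : τ * (2 * lam + L) < 1 := by nlinarith
    have hc : 0 < 1 - τ * (2 * lam + L) := by linarith
    have hx2 : (0:ℝ) < (1 - x) ^ 2 := pow_pos (by linarith) 2
    have hy2 : (0:ℝ) < (1 - y) ^ 2 := pow_pos (by linarith) 2
    -- G[·, τ] is strictly increasing: G[x,τ] < G[y,τ]
    have h1 : (x / (1 - x) ^ 2) * (1 - τ * (2 * lam + L) + τ * (lam + L) * x) <
        (y / (1 - y) ^ 2) * (1 - τ * (2 * lam + L) + τ * (lam + L) * y) := by
      rw [div_mul_eq_mul_div, div_mul_eq_mul_div, div_lt_div_iff₀ hx2 hy2]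
      nlinarith [mul_pos hc (mul_pos (sub_pos.mpr hxy) (by nlinarith : (0:ℝ) < 1 - x * y)),
        mul_nonneg (mul_nonneg hτ.le (add_nonneg hlam hL))
          (mul_nonneg (sub_pos.mpr hxy).le (by nlinarith : (0:ℝ) ≤ x + y - 2 * (x * y)))]
    -- G is nonincreasing in the step: G[x,η] ≤ G[x,τ]
    have h2 : (x / (1 - x) ^ 2) * (1 - η * (2 * lam + L) + η * (lam + L) * x) ≤
        (x / (1 - x) ^ 2) * (1 - τ * (2 * lam + L) + τ * (lam + L) * x) := by
      apply mul_le_mul_of_nonneg_left _ (by positivity)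
      nlinarith [mul_nonneg (sub_nonneg.mpr hτη)
        (by nlinarith : (0:ℝ) ≤ (2 * lam + L) - (lam + L) * x)]
    have e1 := hrecτ k
    have e2 := hrecη k
    rw [← hydef] at e1
    rw [← hxdef] at e2
    linarith [ih]
end

section
/- Estimate of the linearization remainder: set Λ = 2λ* + L*, β = λ* + L* with λ*, L* ≥ 0, and H[X,τ] = (X-τ)²/((1 - τ(2λ*+L*))X + τ²(λ*+L*)). Define R[X,τ] = H[X,τ] - X - τ(ΛX - 2). Then there exists a constant C > 0 (depending only on λ*, L*) such that for all sufficiently small τ > 0 (e.g. τ ≤ min(1, 1/(2(2λ*+L*)))) and all X > 0, |R[X,τ]| ≤ C τ² (1 + X²)/X. -/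
set_option maxHeartbeats 1000000


/-- Estimate of the linearization remainder: with `Λ = 2λ*+L*`,
`H[X,τ] = (X-τ)²/((1-τ(2λ*+L*))X + τ²(λ*+L*))` and
`R[X,τ] = H[X,τ] - X - τ(ΛX - 2)`, there is a constant `C > 0` depending only on
`λ*, L*` such that `|R[X,τ]| ≤ C τ² (1+X²)/X` for all small `τ > 0`
(`τ ≤ 1` and `2τ(2λ*+L*) ≤ 1`) and all `X > 0`. -/
theorem linearization_remainder_estimate
    (lam L : ℝ) (hlam : 0 ≤ lam) (hL : 0 ≤ L) :
    ∃ C : ℝ, 0 < C ∧ ∀ τ X : ℝ, 0 < τ → τ ≤ 1 → 2 * τ * (2 * lam + L) ≤ 1 → 0 < X →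
      |(X - τ) ^ 2 / ((1 - τ * (2 * lam + L)) * X + τ ^ 2 * (lam + L))
        - X - τ * ((2 * lam + L) * X - 2)|
      ≤ C * τ ^ 2 * (1 + X ^ 2) / X := by
  set Λ : ℝ := 2 * lam + L with hΛ
  set β : ℝ := lam + L with hβ
  have hΛ0 : 0 ≤ Λ := by positivity
  have hβ0 : 0 ≤ β := by positivity
  refine ⟨2 * (1 + 3 * β + Λ ^ 2 + Λ * β + 2 * Λ), by positivity, ?_⟩
  intro τ X hτ hτ1 hτΛ hX
  set D : ℝ := (1 - τ * Λ) * X + τ ^ 2 * β with hD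
  have hDX : X / 2 ≤ D := by
    have h1 : (1 : ℝ) / 2 ≤ 1 - τ * Λ := by nlinarith
    have : X / 2 ≤ (1 - τ * Λ) * X := by nlinarith
    nlinarith [sq_nonneg τ]
  have hD0 : 0 < D := lt_of_lt_of_le (by linarith) hDX
  set P : ℝ := 1 - β * X + Λ ^ 2 * X ^ 2 - τ * Λ * β * X - 2 * Λ * X + 2 * τ * β with hP
  have key : (X - τ) ^ 2 / D - X - τ * (Λ * X - 2) = τ ^ 2 * P / D := by
    field_simp
    ring
  rw [key, abs_div, abs_of_pos hD0, div_le_div_iff₀ hD0 hX]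
  have hPabs : |τ ^ 2 * P| ≤ τ ^ 2 * ((1 + 3 * β + Λ ^ 2 + Λ * β + 2 * Λ) * (1 + X ^ 2)) := by
    rw [abs_mul, abs_of_nonneg (by positivity : (0:ℝ) ≤ τ ^ 2)]
    have : |P| ≤ (1 + 3 * β + Λ ^ 2 + Λ * β + 2 * Λ) * (1 + X ^ 2) := by
      rw [abs_le]
      constructor <;> nlinarith [sq_nonneg X, sq_nonneg (1 - X), mul_pos hτ hX,
        mul_nonneg hΛ0 hβ0, mul_nonneg (mul_nonneg hΛ0 hβ0) hX.le,
        mul_nonneg hβ0 hX.le, mul_nonneg hΛ0 hX.le, sq_nonneg (Λ * X)]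
    nlinarith [abs_nonneg P, sq_nonneg τ]
  have hX2D : X ≤ 2 * D := by linarith
  calc |τ ^ 2 * P| * X ≤ τ ^ 2 * ((1 + 3 * β + Λ ^ 2 + Λ * β + 2 * Λ) * (1 + X ^ 2)) * (2 * D) := by
        apply mul_le_mul hPabs hX2D hX.le (by positivity)
    _ = 2 * (1 + 3 * β + Λ ^ 2 + Λ * β + 2 * Λ) * τ ^ 2 * (1 + X ^ 2) * D := by ring
end
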